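/- If x ∈ ℚ[S_m] and y ∈ ℚ[S_n] (m, n ≥ 1) are primitive, i.e., Δ̃(x) = 0 and Δ̃(y) = 0, then x↗y − y↙x is primitive: Δ̃(x↗y − y↙x) = 0 in ⊕_i ℚ[S_i]⊗ℚ[S_{m+n−i}]. -/

import Mathlib

/-- The free module on words of positive integers, with coefficients in `R`.
`ℚ[S_n]` is identified with the span of the permutation words of {1,…,n}. -/
abbrev FW (R : Type) [CommRing R] := (List ℕ) →₀ R

variable {R : Type} [CommRing R]

/-- Concatenation product, extended bilinearly. -/
noncomputable def catW (x y : FW R) : FW R :=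
  x.sum fun u a => y.sum fun v b => Finsupp.single (u ++ v) (a * b)

/-- The bracket [x,y] = x·y − y·x of the concatenation product. -/
noncomputable def brakW (x y : FW R) : FW R := catW x y - catW y x

/-- (Incomplete) binary trees; `nil` is the empty tree. The complete binary tree with
`t.nodes + 1` leaves whose internal nodes form `t` is implicit in the definitions below. -/
inductive BT
  | nil : BT
  | nd : BT → BT → BT
deriving DecidableEq

/-- Number of nodes of a binary tree. -/
def BT.nodes : BT → ℕ
  | .nil => 0
  | .nd l r => l.nodes + r.nodes + 1

/-- The evaluation T(σ) of the complete binary tree `T` whose internal nodes form `t`, with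
leaves labelled left to right by the word `w`: each leaf gets the one-letter word of its label
and each internal node the bracket of concatenation. -/
noncomputable def evalBT : BT → List ℕ → FW R
  | .nil, w => Finsupp.single w 1
  | .nd l r, w => brakW (evalBT l (w.take (l.nodes + 1))) (evalBT r (w.drop (l.nodes + 1)))

/-- The standardization of a word with distinct letters: each letter is replaced by its rank. -/
def stdW (w : List ℕ) : List ℕ := w.map fun x => (w.filter (· ≤ x)).length

/-- The set of permutation words of {1, …, n}. -/
def permWords (n : ℕ) : Finset (List ℕ) := (List.range' 1 n).permutations.toFinset

/-- Convolution α⋆β of two permutation words: the sum of all permutation words γ of size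
|α|+|β| with std(γ(1)⋯γ(m)) = α and std(γ(m+1)⋯γ(m+n)) = β. -/
noncomputable def convW (u v : List ℕ) : FW R :=
  ∑ γ ∈ (permWords (u.length + v.length)).filter
      (fun γ => stdW (γ.take u.length) = u ∧ stdW (γ.drop u.length) = v),
    Finsupp.single γ 1

/-- The convolution product, extended bilinearly. -/
noncomputable def starW (x y : FW R) : FW R :=
  x.sum fun u a => y.sum fun v b => (a * b) • convW u v

/-- Whether the word `w` is an admissible labelling of (the completion of) `t`: at each internal
node, the smallest label lies in the left subtree and the largest in the right subtree. -/
def admB : BT → List ℕ → Bool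
  | .nil, _ => true
  | .nd l r, w =>
    admB l (w.take (l.nodes + 1)) && admB r (w.drop (l.nodes + 1))
      && decide ((w.take (l.nodes + 1)).minimum = w.minimum)
      && decide ((w.drop (l.nodes + 1)).maximum = w.maximum)

/-- c_t: the sum of the evaluations T(σ) over all admissible labellings σ of the complete
binary tree whose internal nodes form `t`. -/
noncomputable def cElt (t : BT) : FW R :=
  ∑ w ∈ (permWords (t.nodes + 1)).filter (fun w => admB t w = true), evalBT t w


/-- The target module for the reduced coproduct: the free module on pairs of words,
modelling ⊕_i ℚ[S_i] ⊗ ℚ[S_{n−i}]. -/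
abbrev FW2 (R : Type) [CommRing R] := (List ℕ × List ℕ) →₀ R

/-- The reduced coproduct of a permutation word of {1,…,n}:
Δ̃(w) = Σ_{i=1}^{n−1} w_{≤i} ⊗ std(w_{>i}), where w_{≤i} is the subword of letters ≤ i and
w_{>i} the subword of letters > i. -/
noncomputable def copW (w : List ℕ) : FW2 R :=
  ∑ i ∈ Finset.Ioo 0 w.length,
    Finsupp.single (w.filter (· ≤ i), stdW (w.filter (fun x => i < x))) 1

/-- The reduced coproduct, extended linearly. -/
noncomputable def coprodW (x : FW R) : FW2 R := x.sum fun w a => a • copW w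

/-- Word-level half product α↗β: the sum of all permutation words γ of size m+n = |α|+|β| with
std(γ(1)⋯γ(m)) = α, std(γ(m+1)⋯γ(m+n)) = β, the letter 1 among the first m letters of γ and
the letter m+n among the last n letters. -/
noncomputable def neW (u v : List ℕ) : FW R :=
  ∑ γ ∈ (permWords (u.length + v.length)).filter
      (fun γ => stdW (γ.take u.length) = u ∧ stdW (γ.drop u.length) = v
        ∧ 1 ∈ γ.take u.length ∧ (u.length + v.length) ∈ γ.drop u.length),
    Finsupp.single γ 1

/-- Word-level half product α↙β: as for ↗ but with the letter 1 among the last n letters and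
the letter m+n among the first m letters. -/
noncomputable def swW (u v : List ℕ) : FW R :=
  ∑ γ ∈ (permWords (u.length + v.length)).filter
      (fun γ => stdW (γ.take u.length) = u ∧ stdW (γ.drop u.length) = v
        ∧ 1 ∈ γ.drop u.length ∧ (u.length + v.length) ∈ γ.take u.length),
    Finsupp.single γ 1

/-- α↗β extended bilinearly. -/
noncomputable def neExt (x y : FW R) : FW R :=
  x.sum fun u a => y.sum fun v b => (a * b) • neW u v

/-- α↙β extended bilinearly. -/
noncomputable def swExt (x y : FW R) : FW R :=
  x.sum fun u a => y.sum fun v b => (a * b) • swW u v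

/-!
Both `Δ̃(x↗y)` and `Δ̃(y↙x)` equal `x ⊗ y`.

For `u ∈ S_m`, `v ∈ S_n`, cutting a word `γ` of `u↗v` at height `i` cuts its two blocks at
heights `j` and `k = i - j`, and `(γ, i) ↦ ((j, k), γ_{≤i}, std γ_{>i})` is a bijection onto
the pairs formed by a word of `u_{≤j} ⋆ v_{≤k}` with `1` in its first block and a word of
`std u_{>j} ⋆ std v_{>k}` with its largest letter in its second block; the inverse interleaves
the pieces along the patterns of the letters `≤ j` in `u` and `≤ k` in `v`. Summed against
`x ⊗ y`, every term with `0 < j < m` or `0 < k < n` is a component of `Δ̃ x` or of `Δ̃ y`, so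
it vanishes. Of the corner cuts, only `(j, k) = (m, 0)` keeps `1` on the left and the largest
letter on the right, and it contributes `u ⊗ v`. The same argument for `y↙x` leaves only the
cut `(0, m)`, again contributing `u ⊗ v`.
-/

open List

section PermWords

variable {n i : ℕ} {w : List ℕ}

theorem mem_permWords : w ∈ permWords n ↔ w ~ range' 1 n := by
  simp [permWords, mem_permutations]

theorem length_of_mem_permWords (h : w ∈ permWords n) : w.length = n := by
  simpa using (mem_permWords.1 h).length_eq

theorem nodup_of_mem_permWords (h : w ∈ permWords n) : w.Nodup :=
  (mem_permWords.1 h).nodup_iff.2 nodup_range'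

theorem bounds_of_mem_permWords (h : w ∈ permWords n) {a : ℕ} (ha : a ∈ w) :
    1 ≤ a ∧ a ≤ n := by
  obtain ⟨k, hk, rfl⟩ := mem_range'.1 ((mem_permWords.1 h).mem_iff.1 ha)
  omega

theorem mem_of_mem_permWords (h : w ∈ permWords n) {a : ℕ} (ha₁ : 1 ≤ a) (ha₂ : a ≤ n) :
    a ∈ w :=
  (mem_permWords.1 h).mem_iff.2 (mem_range'.2 ⟨a - 1, by omega, by omega⟩)

theorem filter_range'_le {s L a : ℕ} (h1 : s ≤ a + 1) (h2 : a < s + L) :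
    (range' s L).filter (· ≤ a) = range' s (a + 1 - s) := by
  have hsplit := range'_append (s := s) (m := a + 1 - s) (n := L - (a + 1 - s)) (step := 1)
  rw [show a + 1 - s + (L - (a + 1 - s)) = L by omega] at hsplit
  rw [← hsplit, filter_append, filter_eq_self.2, filter_eq_nil_iff.2, append_nil] <;>
  · intro x hx
    obtain ⟨k, hk, rfl⟩ := mem_range'.1 hx
    simp only [decide_eq_true_eq]
    omega

theorem filter_range'_gt {s L a : ℕ} (h1 : s ≤ a + 1) (h2 : a < s + L) :
    (range' s L).filter (a < ·) = range' (a + 1) (s + L - (a + 1)) := by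
  have hsplit := range'_append (s := s) (m := a + 1 - s) (n := s + L - (a + 1)) (step := 1)
  rw [show s + 1 * (a + 1 - s) = a + 1 by omega,
    show a + 1 - s + (s + L - (a + 1)) = L by omega] at hsplit
  rw [← hsplit, filter_append, filter_eq_nil_iff.2, filter_eq_self.2, nil_append] <;>
  · intro x hx
    obtain ⟨k, hk, rfl⟩ := mem_range'.1 hx
    simp only [decide_eq_true_eq]
    omega

theorem filter_le_mem_permWords (h : w ∈ permWords n) (hi : i ≤ n) :
    w.filter (· ≤ i) ∈ permWords i := by
  rw [mem_permWords] at h ⊢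
  refine (h.filter _).trans ?_
  rw [filter_range'_le (by omega) (by omega)]
  simp

theorem filter_gt_perm_of_mem_permWords (h : w ∈ permWords n) (hi : i ≤ n) :
    w.filter (i < ·) ~ range' (i + 1) (n - i) := by
  refine ((mem_permWords.1 h).filter _).trans ?_
  rw [filter_range'_gt (by omega) (by omega), show 1 + n - (i + 1) = n - i by omega]

theorem length_filter_le_of_mem_permWords (h : w ∈ permWords n) (hi : i ≤ n) :
    (w.filter (· ≤ i)).length = i :=
  length_of_mem_permWords (filter_le_mem_permWords h hi)

theorem length_filter_gt_of_mem_permWords (h : w ∈ permWords n) (hi : i ≤ n) :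
    (w.filter (i < ·)).length = n - i := by
  simpa using (filter_gt_perm_of_mem_permWords h hi).length_eq

end PermWords

section Rank

def rankW (w : List ℕ) (a : ℕ) : ℕ := (w.filter (· ≤ a)).length

theorem stdW_eq_map_rankW (w : List ℕ) : stdW w = w.map (rankW w) := rfl

@[simp]
theorem length_stdW (w : List ℕ) : (stdW w).length = w.length := length_map _

theorem rankW_append (A B : List ℕ) (a : ℕ) : rankW (A ++ B) a = rankW A a + rankW B a := by
  simp [rankW, filter_append]

theorem rankW_mono (w : List ℕ) {a b : ℕ} (h : a ≤ b) : rankW w a ≤ rankW w b := by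
  simp only [rankW, ← countP_eq_length_filter]
  exact countP_mono_left fun x _ hx => by simp at hx ⊢; omega

theorem rankW_lt_rankW {w : List ℕ} {a b : ℕ} (hb : b ∈ w) (h : a < b) :
    rankW w a < rankW w b := by
  have hsub : w.filter (· ≤ a) = (w.filter (· ≤ b)).filter (· ≤ a) := by
    rw [filter_filter]
    exact filter_congr fun x _ => by simp; omega
  rw [rankW, hsub]
  exact length_filter_lt_length_iff_exists.2 ⟨b, by simp [hb], by simpa using h⟩

theorem rankW_le_rankW_iff {w : List ℕ} {a : ℕ} (ha : a ∈ w) (b : ℕ) :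
    rankW w a ≤ rankW w b ↔ a ≤ b := by
  refine ⟨fun h => ?_, rankW_mono w⟩
  by_contra! hc
  exact absurd h (not_le.2 (rankW_lt_rankW ha hc))

theorem one_le_rankW {w : List ℕ} {a : ℕ} (ha : a ∈ w) : 1 ≤ rankW w a :=
  length_pos_of_mem (a := a) (by simp [ha])

theorem rankW_le_length (w : List ℕ) (a : ℕ) : rankW w a ≤ w.length :=
  length_filter_le _ _

theorem filter_not_le (w : List ℕ) (i : ℕ) :
    w.filter (fun a => !decide (a ≤ i)) = w.filter (i < ·) :=
  filter_congr fun a _ => by simp only [← decide_not, not_le]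

theorem length_filter_gt_eq (w : List ℕ) (a : ℕ) :
    (w.filter (a < ·)).length = w.length - rankW w a := by
  have h := length_eq_length_filter_add (l := w) (· ≤ a)
  rw [filter_not_le] at h
  unfold rankW
  omega

theorem stdW_map_of_le_iff {w : List ℕ} {f : ℕ → ℕ}
    (hf : ∀ a ∈ w, ∀ b ∈ w, (f a ≤ f b ↔ a ≤ b)) : stdW (w.map f) = stdW w := by
  rw [stdW_eq_map_rankW, stdW_eq_map_rankW, map_map]
  refine map_congr_left fun a ha => ?_
  simp only [Function.comp_apply, rankW, ← countP_eq_length_filter, countP_map]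
  exact countP_congr fun b hb => by simp [hf b hb a ha]

theorem stdW_map_add (w : List ℕ) (c : ℕ) : stdW (w.map (· + c)) = stdW w :=
  stdW_map_of_le_iff fun _ _ _ _ => by omega

theorem stdW_map_rankW {w C : List ℕ} (h : ∀ a ∈ w, a ∈ C) :
    stdW (w.map (rankW C)) = stdW w :=
  stdW_map_of_le_iff fun a ha b _ => rankW_le_rankW_iff (h a ha) b

theorem rankW_of_perm_range' {w : List ℕ} {c L : ℕ} (h : w ~ range' (c + 1) L)
    {a : ℕ} (ha : a ∈ w) : rankW w a = a - c := by
  obtain ⟨k, hk, rfl⟩ := mem_range'.1 (h.mem_iff.1 ha)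
  rw [rankW, ← countP_eq_length_filter, h.countP_eq, countP_eq_length_filter,
    filter_range'_le (by omega) (by omega), length_range']
  omega

theorem map_add_stdW_of_perm_range' {w : List ℕ} {c L : ℕ} (h : w ~ range' (c + 1) L) :
    (stdW w).map (· + c) = w := by
  rw [stdW_eq_map_rankW, map_map]
  refine (map_congr_left fun a ha => ?_).trans (map_id w)
  obtain ⟨k, hk, rfl⟩ := mem_range'.1 (h.mem_iff.1 ha)
  simp only [Function.comp_apply, rankW_of_perm_range' h ha, id_eq]
  omega

theorem stdW_of_mem_permWords {n : ℕ} {w : List ℕ} (h : w ∈ permWords n) : stdW w = w := by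
  simpa using map_add_stdW_of_perm_range' (c := 0) (by simpa using mem_permWords.1 h)

theorem stdW_mem_permWords {w : List ℕ} (h : w.Nodup) : stdW w ∈ permWords w.length := by
  have hnd : (stdW w).Nodup := h.map_on fun a ha b hb hab => by
    rcases lt_trichotomy a b with hlt | rfl | hgt
    · exact absurd hab (rankW_lt_rankW hb hlt).ne
    · rfl
    · exact absurd hab (rankW_lt_rankW ha hgt).ne'
  have hsub : stdW w ⊆ range' 1 w.length := fun a ha => by
    rw [stdW_eq_map_rankW] at ha
    obtain ⟨b, hb, rfl⟩ := mem_map.1 ha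
    have h1 := one_le_rankW hb
    have h2 := rankW_le_length w b
    exact mem_range'.2 ⟨rankW w b - 1, by omega, by omega⟩
  exact mem_permWords.2 ((hnd.subperm hsub).perm_of_length_le (by simp))

theorem filter_le_stdW (A : List ℕ) (i : ℕ) :
    (stdW A).filter (· ≤ rankW A i) = (A.filter (· ≤ i)).map (rankW A) := by
  rw [stdW_eq_map_rankW, filter_map]
  exact congrArg _ (filter_congr fun a ha => decide_eq_decide.2 (rankW_le_rankW_iff ha i))

theorem filter_gt_stdW (A : List ℕ) (i : ℕ) :
    (stdW A).filter (rankW A i < ·) = (A.filter (i < ·)).map (rankW A) := by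
  rw [stdW_eq_map_rankW, filter_map]
  refine congrArg _ (filter_congr fun a ha => decide_eq_decide.2 ?_)
  have := rankW_le_rankW_iff ha i
  omega

theorem map_le_stdW (A : List ℕ) (i : ℕ) :
    (stdW A).map (fun b => decide (b ≤ rankW A i)) = A.map (fun a => decide (a ≤ i)) := by
  rw [stdW_eq_map_rankW, map_map]
  exact map_congr_left fun a ha => decide_eq_decide.2 (rankW_le_rankW_iff ha i)

theorem stdW_filter_le (A : List ℕ) (i : ℕ) :
    stdW (A.filter (· ≤ i)) = (stdW A).filter (· ≤ rankW A i) := by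
  rw [filter_le_stdW, stdW_eq_map_rankW (A.filter (· ≤ i))]
  refine map_congr_left fun a ha => ?_
  have hai := (mem_filter.1 ha).2
  simp only [rankW, ← countP_eq_length_filter, countP_filter]
  exact countP_congr fun b _ => by simp at hai ⊢; omega

theorem stdW_filter_gt (A : List ℕ) (i : ℕ) :
    stdW (A.filter (i < ·)) = stdW ((stdW A).filter (rankW A i < ·)) := by
  rw [filter_gt_stdW, stdW_map_rankW fun a ha => (mem_filter.1 ha).1]

end Rank

section MergeByMask

theorem count_true_map {α : Type*} (P : α → Bool) (w : List α) :
    (w.map P).count true = (w.filter P).length := by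
  rw [count, countP_map, ← countP_eq_length_filter]
  congr 1
  funext a
  simp

theorem count_false_map {α : Type*} (P : α → Bool) (w : List α) :
    (w.map P).count false = (w.filter (!P ·)).length := by
  rw [count, countP_map, ← countP_eq_length_filter]
  congr 1
  funext a
  simp

variable {α : Type*} [Inhabited α]

def mergeByMask : List Bool → List α → List α → List α
  | [], _, _ => []
  | true :: mk, s, l => s.headI :: mergeByMask mk s.tail l
  | false :: mk, s, l => l.headI :: mergeByMask mk s l.tail

theorem length_mergeByMask (mk : List Bool) (s l : List α) :
    (mergeByMask mk s l).length = mk.length := by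
  induction mk generalizing s l with
  | nil => rfl
  | cons b mk ih => cases b <;> simp [mergeByMask, ih]

theorem mergeByMask_map_filter (w : List α) (P : α → Bool) :
    mergeByMask (w.map P) (w.filter P) (w.filter (!P ·)) = w := by
  induction w with
  | nil => rfl
  | cons a w ih => cases hPa : P a <;> simp [mergeByMask, hPa, ih]

variable {mk : List Bool} {s l : List α}

theorem perm_mergeByMask (hs : s.length = mk.count true) (hl : l.length = mk.count false) :
    mergeByMask mk s l ~ s ++ l := by
  induction mk generalizing s l with
  | nil => simp_all [mergeByMask]
  | cons b mk ih =>
    cases b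
    · obtain _ | ⟨c, l⟩ := l
      · simp at hl
      · simp only [count_cons] at hs hl
        exact ((ih (by simpa using hs) (by simpa using hl)).cons c).trans perm_middle.symm
    · obtain _ | ⟨c, s⟩ := s
      · simp at hs
      · simp only [count_cons] at hs hl
        exact (ih (by simpa using hs) (by simpa using hl)).cons c

theorem filter_mergeByMask (Q : α → Bool) (hQs : ∀ a ∈ s, Q a) (hQl : ∀ a ∈ l, Q a = false)
    (hs : s.length = mk.count true) (hl : l.length = mk.count false) :
    (mergeByMask mk s l).filter Q = s ∧ (mergeByMask mk s l).filter (!Q ·) = l := by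
  induction mk generalizing s l with
  | nil => simp_all [mergeByMask]
  | cons b mk ih =>
    cases b
    · obtain _ | ⟨c, l⟩ := l
      · simp at hl
      · simp only [count_cons] at hs hl
        have := ih hQs (fun a ha => hQl a (mem_cons_of_mem c ha)) (by simpa using hs)
          (by simpa using hl)
        simp_all [mergeByMask]
    · obtain _ | ⟨c, s⟩ := s
      · simp at hs
      · simp only [count_cons] at hs hl
        have := ih (fun a ha => hQs a (mem_cons_of_mem c ha)) hQl (by simpa using hs)
          (by simpa using hl)
        simp_all [mergeByMask]

theorem map_mergeByMask {β : Type*} [Inhabited β] (f : α → β)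
    (hs : s.length = mk.count true) (hl : l.length = mk.count false) :
    (mergeByMask mk s l).map f = mergeByMask mk (s.map f) (l.map f) := by
  induction mk generalizing s l with
  | nil => rfl
  | cons b mk ih =>
    cases b
    · obtain _ | ⟨c, l⟩ := l
      · simp at hl
      · simp only [count_cons] at hs hl
        simp [mergeByMask, ih (by simpa using hs) (by simpa using hl)]
    · obtain _ | ⟨c, s⟩ := s
      · simp at hs
      · simp only [count_cons] at hs hl
        simp [mergeByMask, ih (by simpa using hs) (by simpa using hl)]

end MergeByMask

theorem stdW_mergeByMask {mk : List Bool} {s l : List ℕ} {c : ℕ}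
    (hsc : ∀ a ∈ s, a ≤ c) (hlc : ∀ a ∈ l, c < a)
    (hs : s.length = mk.count true) (hl : l.length = mk.count false) :
    stdW (mergeByMask mk s l) = mergeByMask mk (stdW s) ((stdW l).map (· + s.length)) := by
  have hrk (a : ℕ) : rankW (mergeByMask mk s l) a = rankW s a + rankW l a := by
    rw [← rankW_append]
    simp only [rankW, ← countP_eq_length_filter, (perm_mergeByMask hs hl).countP_eq]
  have hs' : s.map (rankW (mergeByMask mk s l)) = stdW s :=
    map_congr_left fun a ha => by
      have : rankW l a = 0 := by
        simp only [rankW, length_eq_zero_iff, filter_eq_nil_iff, decide_eq_true_eq, not_le]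
        exact fun b hb => (hsc a ha).trans_lt (hlc b hb)
      rw [hrk, this, add_zero]; rfl
  have hl' : l.map (rankW (mergeByMask mk s l)) = (stdW l).map (· + s.length) := by
    rw [stdW_eq_map_rankW, map_map]
    refine map_congr_left fun a ha => ?_
    have : rankW s a = s.length := by
      rw [rankW, filter_eq_self.2 fun b hb => decide_eq_true ((hsc b hb).trans (hlc a ha).le)]
    simp only [hrk, this, Function.comp_apply, add_comm]
  rw [stdW_eq_map_rankW, map_mergeByMask _ hs hl, hs', hl']

section ConvSets

def minConvSet (b : Bool) (u v : List ℕ) : Finset (List ℕ) :=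
  (permWords (u.length + v.length)).filter fun γ =>
    stdW (γ.take u.length) = u ∧ stdW (γ.drop u.length) = v ∧
      1 ∈ (if b then γ.take u.length else γ.drop u.length)

def maxConvSet (b : Bool) (u v : List ℕ) : Finset (List ℕ) :=
  (permWords (u.length + v.length)).filter fun γ =>
    stdW (γ.take u.length) = u ∧ stdW (γ.drop u.length) = v ∧
      (u.length + v.length) ∈ (if b then γ.drop u.length else γ.take u.length)

/-- The support of `u↗v` for `b₁ = b₂ = true` and of `u↙v` for `b₁ = b₂ = false`. -/
def halfConvSet (b₁ b₂ : Bool) (u v : List ℕ) : Finset (List ℕ) :=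
  (permWords (u.length + v.length)).filter fun γ =>
    stdW (γ.take u.length) = u ∧ stdW (γ.drop u.length) = v ∧
      1 ∈ (if b₁ then γ.take u.length else γ.drop u.length) ∧
      (u.length + v.length) ∈ (if b₂ then γ.drop u.length else γ.take u.length)

theorem neW_eq_sum_halfConvSet (u v : List ℕ) :
    neW (R := R) u v = ∑ γ ∈ halfConvSet true true u v, Finsupp.single γ 1 := rfl

theorem swW_eq_sum_halfConvSet (u v : List ℕ) :
    swW (R := R) u v = ∑ γ ∈ halfConvSet false false u v, Finsupp.single γ 1 := rfl

variable {A B : List ℕ}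

theorem append_mem_minConvSet {b : Bool} (h : A ++ B ∈ permWords (A.length + B.length))
    (h1 : 1 ∈ if b then A else B) : A ++ B ∈ minConvSet b (stdW A) (stdW B) := by
  simpa [minConvSet, h] using h1

theorem append_mem_maxConvSet {b : Bool} (h : A ++ B ∈ permWords (A.length + B.length))
    (hN : A.length + B.length ∈ if b then B else A) :
    A ++ B ∈ maxConvSet b (stdW A) (stdW B) := by
  simpa [maxConvSet, h] using hN

theorem append_mem_halfConvSet {b₁ b₂ : Bool} (h : A ++ B ∈ permWords (A.length + B.length))
    (h1 : 1 ∈ if b₁ then A else B) (hN : A.length + B.length ∈ if b₂ then B else A) :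
    A ++ B ∈ halfConvSet b₁ b₂ (stdW A) (stdW B) := by
  simpa [halfConvSet, h] using ⟨h1, hN⟩

end ConvSets

section Cut

def cutW (w : List ℕ) (i : ℕ) : List ℕ × List ℕ := (w.filter (· ≤ i), stdW (w.filter (i < ·)))

theorem copW_eq_sum_cutW (w : List ℕ) :
    copW (R := R) w = ∑ i ∈ Finset.Ioo 0 w.length, Finsupp.single (cutW w i) 1 := rfl

variable {N n i : ℕ} {w A B : List ℕ}

theorem cutW_self_of_mem_permWords (h : w ∈ permWords n) : cutW w n = (w, []) := by
  have hle : ∀ a ∈ w, a ≤ n := fun a ha => (bounds_of_mem_permWords h ha).2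
  rw [cutW, filter_eq_self.2 fun a ha => by simpa using hle a ha,
    filter_eq_nil_iff.2 fun a ha => by simpa using hle a ha]
  rfl

theorem cutW_zero_of_mem_permWords (h : w ∈ permWords n) : cutW w 0 = ([], w) := by
  have hpos : ∀ a ∈ w, 1 ≤ a := fun a ha => (bounds_of_mem_permWords h ha).1
  rw [cutW, filter_eq_nil_iff.2 fun a ha => by have := hpos a ha; simp; omega,
    filter_eq_self.2 fun a ha => by have := hpos a ha; simp; omega, stdW_of_mem_permWords h]

theorem map_add_cutW_snd (h : w ∈ permWords N) (hi : i ≤ N) :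
    (cutW w i).2.map (· + i) = w.filter (i < ·) :=
  map_add_stdW_of_perm_range' (filter_gt_perm_of_mem_permWords h hi)

theorem take_cutW_fst_append (A B : List ℕ) (i : ℕ) :
    (cutW (A ++ B) i).1.take (rankW A i) = A.filter (· ≤ i) := by
  simp [cutW, rankW, filter_append]

theorem drop_cutW_fst_append (A B : List ℕ) (i : ℕ) :
    (cutW (A ++ B) i).1.drop (rankW A i) = B.filter (· ≤ i) := by
  simp [cutW, rankW, filter_append]

theorem map_add_take_cutW_snd_append (h : A ++ B ∈ permWords N) (hi : i ≤ N) :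
    ((cutW (A ++ B) i).2.take (A.length - rankW A i)).map (· + i) = A.filter (i < ·) := by
  rw [map_take, map_add_cutW_snd h hi, filter_append]
  exact take_left' (length_filter_gt_eq A i)

theorem map_add_drop_cutW_snd_append (h : A ++ B ∈ permWords N) (hi : i ≤ N) :
    ((cutW (A ++ B) i).2.drop (A.length - rankW A i)).map (· + i) = B.filter (i < ·) := by
  rw [map_drop, map_add_cutW_snd h hi, filter_append]
  exact drop_left' (length_filter_gt_eq A i)

theorem rankW_add_rankW_of_append_mem_permWords (h : A ++ B ∈ permWords N) (hi : i ≤ N) :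
    rankW A i + rankW B i = i := by
  rw [← rankW_append, rankW, length_filter_le_of_mem_permWords h hi]

theorem cutW_fst_mem_minConvSet {b : Bool} (h : A ++ B ∈ permWords N) (hi : i ≤ N)
    (hi1 : 1 ≤ i) (h1 : 1 ∈ if b then A else B) :
    (cutW (A ++ B) i).1 ∈
      minConvSet b (cutW (stdW A) (rankW A i)).1 (cutW (stdW B) (rankW B i)).1 := by
  have hsplit : (cutW (A ++ B) i).1 = A.filter (· ≤ i) ++ B.filter (· ≤ i) := filter_append ..
  have hmem : (cutW (A ++ B) i).1 ∈ permWords i := filter_le_mem_permWords h hi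
  rw [hsplit] at hmem ⊢
  rw [cutW, cutW, ← stdW_filter_le, ← stdW_filter_le]
  refine append_mem_minConvSet ?_ ?_
  · rwa [← length_append, length_of_mem_permWords hmem]
  · cases b <;> simpa [hi1] using h1

theorem cutW_snd_mem_maxConvSet {b : Bool} (h : A ++ B ∈ permWords N) (hi : i < N)
    (hN : N ∈ if b then B else A) :
    (cutW (A ++ B) i).2 ∈
      maxConvSet b (cutW (stdW A) (rankW A i)).2 (cutW (stdW B) (rankW B i)).2 := by
  set L := A.length - rankW A i
  set ε := (cutW (A ++ B) i).2
  have hε : ε ∈ permWords (N - i) := by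
    have := stdW_mem_permWords ((nodup_of_mem_permWords h).filter (i < ·))
    rwa [length_filter_gt_of_mem_permWords h hi.le] at this
  have hA := map_add_take_cutW_snd_append h hi.le
  have hB := map_add_drop_cutW_snd_append h hi.le
  have hstdA : stdW (ε.take L) = (cutW (stdW A) (rankW A i)).2 := by
    rw [cutW, ← stdW_filter_gt, ← hA, stdW_map_add]
  have hstdB : stdW (ε.drop L) = (cutW (stdW B) (rankW B i)).2 := by
    rw [cutW, ← stdW_filter_gt, ← hB, stdW_map_add]
  have hlen : (ε.take L).length + (ε.drop L).length = N - i := by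
    rw [← length_append, take_append_drop, length_of_mem_permWords hε]
  have key : ε.take L ++ ε.drop L ∈ maxConvSet b (stdW (ε.take L)) (stdW (ε.drop L)) := by
    refine append_mem_maxConvSet (by rwa [take_append_drop, hlen]) ?_
    rw [hlen]
    have hN' := (mem_filter (p := (i < ·))).2 ⟨hN, decide_eq_true hi⟩
    cases b
    · obtain ⟨a, ha, rfl⟩ := mem_map.1 (hA ▸ hN')
      simpa using ha
    · obtain ⟨a, ha, rfl⟩ := mem_map.1 (hB ▸ hN')
      simpa using ha
  rwa [take_append_drop, hstdA, hstdB] at key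

end Cut

section Join

/-- Rebuilds a block with standardization `u` from its letters `s` at most `c` and the
standardization `t` of its letters above `c`. -/
def mergeSide (u : List ℕ) (j c : ℕ) (s t : List ℕ) : List ℕ :=
  mergeByMask (u.map (· ≤ j)) s (t.map (· + c))

variable {m j c : ℕ} {u s t : List ℕ}

theorem length_mergeSide (u : List ℕ) (j c : ℕ) (s t : List ℕ) :
    (mergeSide u j c s t).length = u.length := by
  rw [mergeSide, length_mergeByMask, length_map]

theorem mergeSide_spec (hu : u ∈ permWords m) (hj : j ≤ m) (hs : stdW s = (cutW u j).1)
    (ht : stdW t = (cutW u j).2) (hsc : ∀ a ∈ s, a ≤ c) (ht1 : ∀ a ∈ t, 1 ≤ a) :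
    stdW (mergeSide u j c s t) = u ∧ (mergeSide u j c s t).filter (· ≤ c) = s ∧
      (mergeSide u j c s t).filter (c < ·) = t.map (· + c) := by
  have hsj : s.length = j := by
    rw [← length_stdW, hs, cutW, length_filter_le_of_mem_permWords hu hj]
  have hsl : s.length = (u.map fun a => decide (a ≤ j)).count true := by
    rw [count_true_map, hsj, length_filter_le_of_mem_permWords hu hj]
  have htl : (t.map (· + c)).length = (u.map fun a => decide (a ≤ j)).count false := by
    rw [count_false_map, filter_not_le, length_map, ← length_stdW t, ht, cutW, length_stdW]
  have hlc : ∀ a ∈ t.map (· + c), c < a := by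
    intro a ha
    obtain ⟨b, hb, rfl⟩ := mem_map.1 ha
    have := ht1 b hb
    omega
  have hfilter := filter_mergeByMask (fun a => decide (a ≤ c)) (by simpa using hsc)
    (fun a ha => by simpa using hlc a ha) hsl htl
  refine ⟨?_, hfilter.1, by rw [← filter_not_le]; exact hfilter.2⟩
  rw [mergeSide, stdW_mergeByMask hsc hlc hsl htl, stdW_map_add, ht, hs, cutW, hsj,
    map_add_stdW_of_perm_range' (filter_gt_perm_of_mem_permWords hu hj), ← filter_not_le]
  exact mergeByMask_map_filter u _

theorem mergeSide_stdW_rankW (A : List ℕ) (i : ℕ) (h : t.map (· + i) = A.filter (i < ·)) :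
    mergeSide (stdW A) (rankW A i) i (A.filter (· ≤ i)) t = A := by
  rw [mergeSide, map_le_stdW, h, ← filter_not_le]
  exact mergeByMask_map_filter A _

end Join

section Bijection

/-- Cut positions `(j, k)`: `j` letters of the first block and `k` of the second go below
the cut. The block holding `1` must send a letter below, the block holding the largest
letter one above. -/
def cutIndices (m n : ℕ) (b₁ b₂ : Bool) : Finset (ℕ × ℕ) :=
  (Finset.range (m + 1) ×ˢ Finset.range (n + 1)).filter fun p =>
    1 ≤ (if b₁ then p.1 else p.2) ∧ 1 ≤ (if b₂ then n - p.2 else m - p.1)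

def splitCut (m : ℕ) (γi : List ℕ × ℕ) : (_ : ℕ × ℕ) × (List ℕ × List ℕ) :=
  ⟨(rankW (γi.1.take m) γi.2, γi.2 - rankW (γi.1.take m) γi.2), cutW γi.1 γi.2⟩

def joinCut (m : ℕ) (u v : List ℕ) : (_ : ℕ × ℕ) × (List ℕ × List ℕ) → List ℕ × ℕ
  | ⟨(j, k), (δ, ε)⟩ =>
    (mergeSide u j (j + k) (δ.take j) (ε.take (m - j)) ++
      mergeSide v k (j + k) (δ.drop j) (ε.drop (m - j)), j + k)

variable {m n j k : ℕ} {u v γ δ ε : List ℕ} {b₁ b₂ : Bool}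

theorem exists_append_of_mem_halfConvSet (hu : u ∈ permWords m) (hv : v ∈ permWords n)
    (hγ : γ ∈ halfConvSet b₁ b₂ u v) :
    ∃ A B, γ = A ++ B ∧ A.length = m ∧ stdW A = u ∧ stdW B = v ∧ A ++ B ∈ permWords (m + n) ∧
      (1 ∈ if b₁ then A else B) ∧ (m + n ∈ if b₂ then B else A) := by
  simp only [halfConvSet, Finset.mem_filter, length_of_mem_permWords hu,
    length_of_mem_permWords hv] at hγ
  obtain ⟨hγp, hA, hB, h1, hN⟩ := hγ
  refine ⟨γ.take m, γ.drop m, (take_append_drop m γ).symm, ?_, hA, hB, ?_, h1, hN⟩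
  · simp [length_of_mem_permWords hγp]
  · rwa [take_append_drop]

theorem splitCut_mem (hu : u ∈ permWords m) (hv : v ∈ permWords n) {i : ℕ}
    (hγ : γ ∈ halfConvSet b₁ b₂ u v) (hi : i ∈ Finset.Ioo 0 (m + n)) :
    splitCut m (γ, i) ∈ (cutIndices m n b₁ b₂).sigma fun p =>
      minConvSet b₁ (cutW u p.1).1 (cutW v p.2).1 ×ˢ
        maxConvSet b₂ (cutW u p.1).2 (cutW v p.2).2 := by
  rw [Finset.mem_Ioo] at hi
  obtain ⟨A, B, rfl, hAm, rfl, rfl, hγp, h1, hN⟩ := exists_append_of_mem_halfConvSet hu hv hγ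
  have hBn : B.length = n := by rw [← length_stdW, length_of_mem_permWords hv]
  have hrk := rankW_add_rankW_of_append_mem_permWords hγp hi.2.le
  have hjm := rankW_le_length A i
  have hkn := rankW_le_length B i
  have hlo : 1 ≤ (if b₁ then rankW A i else rankW B i) := by
    cases b₁ <;> exact length_pos_of_mem (mem_filter.2 ⟨h1, by simp; omega⟩)
  have hhi : 1 ≤ (if b₂ then n - rankW B i else m - rankW A i) := by
    rw [← hAm, ← hBn, ← length_filter_gt_eq, ← length_filter_gt_eq]
    cases b₂ <;> exact length_pos_of_mem (mem_filter.2 ⟨hN, by simpa using hi.2⟩)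
  have hk : i - rankW A i = rankW B i := by omega
  simp only [splitCut, Finset.mem_sigma, Finset.mem_product, take_left' hAm, hk]
  refine ⟨?_, cutW_fst_mem_minConvSet hγp hi.2.le hi.1 h1,
    cutW_snd_mem_maxConvSet hγp hi.2 hN⟩
  simp only [cutIndices, Finset.mem_filter, Finset.mem_product, Finset.mem_range]
  exact ⟨⟨by omega, by omega⟩, hlo, hhi⟩


theorem length_cutW_fst (hu : u ∈ permWords m) (hj : j ≤ m) : (cutW u j).1.length = j :=
  length_filter_le_of_mem_permWords hu hj

theorem length_cutW_snd (hu : u ∈ permWords m) (hj : j ≤ m) :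
    (cutW u j).2.length = m - j := by
  rw [cutW, length_stdW, length_filter_gt_of_mem_permWords hu hj]

theorem mem_minConvSet_cutW (hu : u ∈ permWords m) (hv : v ∈ permWords n) (hj : j ≤ m)
    (hk : k ≤ n) :
    δ ∈ minConvSet b₁ (cutW u j).1 (cutW v k).1 ↔ δ ∈ permWords (j + k) ∧
      stdW (δ.take j) = (cutW u j).1 ∧ stdW (δ.drop j) = (cutW v k).1 ∧
      1 ∈ (if b₁ then δ.take j else δ.drop j) := by
  simp only [minConvSet, Finset.mem_filter, length_cutW_fst hu hj, length_cutW_fst hv hk]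

theorem mem_maxConvSet_cutW (hu : u ∈ permWords m) (hv : v ∈ permWords n) (hj : j ≤ m)
    (hk : k ≤ n) :
    ε ∈ maxConvSet b₂ (cutW u j).2 (cutW v k).2 ↔ ε ∈ permWords (m - j + (n - k)) ∧
      stdW (ε.take (m - j)) = (cutW u j).2 ∧ stdW (ε.drop (m - j)) = (cutW v k).2 ∧
      m - j + (n - k) ∈ (if b₂ then ε.drop (m - j) else ε.take (m - j)) := by
  simp only [maxConvSet, Finset.mem_filter, length_cutW_snd hu hj, length_cutW_snd hv hk]

theorem joinCut_spec (hu : u ∈ permWords m) (hv : v ∈ permWords n) (hj : j ≤ m) (hk : k ≤ n)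
    (hδ : δ ∈ minConvSet b₁ (cutW u j).1 (cutW v k).1)
    (hε : ε ∈ maxConvSet b₂ (cutW u j).2 (cutW v k).2) :
    (stdW (mergeSide u j (j + k) (δ.take j) (ε.take (m - j))) = u ∧
      (mergeSide u j (j + k) (δ.take j) (ε.take (m - j))).filter (· ≤ j + k) = δ.take j ∧
      (mergeSide u j (j + k) (δ.take j) (ε.take (m - j))).filter (j + k < ·) =
        (ε.take (m - j)).map (· + (j + k))) ∧
    (stdW (mergeSide v k (j + k) (δ.drop j) (ε.drop (m - j))) = v ∧
      (mergeSide v k (j + k) (δ.drop j) (ε.drop (m - j))).filter (· ≤ j + k) = δ.drop j ∧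
      (mergeSide v k (j + k) (δ.drop j) (ε.drop (m - j))).filter (j + k < ·) =
        (ε.drop (m - j)).map (· + (j + k))) := by
  obtain ⟨hδp, hδA, hδB, -⟩ := (mem_minConvSet_cutW hu hv hj hk).1 hδ
  obtain ⟨hεp, hεA, hεB, -⟩ := (mem_maxConvSet_cutW hu hv hj hk).1 hε
  have hle : ∀ a ∈ δ, a ≤ j + k := fun a ha => (bounds_of_mem_permWords hδp ha).2
  have hpos : ∀ a ∈ ε, 1 ≤ a := fun a ha => (bounds_of_mem_permWords hεp ha).1
  exact ⟨mergeSide_spec hu hj hδA hεA (fun a ha => hle a (mem_of_mem_take ha))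
      (fun a ha => hpos a (mem_of_mem_take ha)),
    mergeSide_spec hv hk hδB hεB (fun a ha => hle a (mem_of_mem_drop ha))
      (fun a ha => hpos a (mem_of_mem_drop ha))⟩

theorem map_add_perm_range' {L : ℕ} (h : ε ∈ permWords L) (i : ℕ) :
    ε.map (· + i) ~ range' (i + 1) L := by
  have := (mem_permWords.1 h).map (· + i)
  rwa [show (range' 1 L).map (· + i) = range' (i + 1) L by
    simpa [add_comm] using map_add_range' (a := i) 1 L 1] at this

theorem mem_permWords_of_cutW {w : List ℕ} {N i : ℕ} (hi : i ≤ N)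
    (h₁ : (cutW w i).1 ∈ permWords i) (h₂ : w.filter (i < ·) = ε.map (· + i))
    (hε : ε ∈ permWords (N - i)) : w ∈ permWords N := by
  have hw := (filter_append_perm (· ≤ i) w).symm
  rw [filter_not_le, h₂] at hw
  have := hw.trans ((mem_permWords.1 h₁).append (map_add_perm_range' hε i))
  rwa [add_comm i 1, range'_append_1, Nat.add_sub_cancel' hi, ← mem_permWords] at this

theorem joinCut_mem (hu : u ∈ permWords m) (hv : v ∈ permWords n)
    (hp : (j, k) ∈ cutIndices m n b₁ b₂) (hδ : δ ∈ minConvSet b₁ (cutW u j).1 (cutW v k).1)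
    (hε : ε ∈ maxConvSet b₂ (cutW u j).2 (cutW v k).2) :
    joinCut m u v ⟨(j, k), (δ, ε)⟩ ∈ halfConvSet b₁ b₂ u v ×ˢ Finset.Ioo 0 (m + n) := by
  simp only [cutIndices, Finset.mem_filter, Finset.mem_product, Finset.mem_range] at hp
  obtain ⟨⟨hj, hk⟩, hlo, hhi⟩ := hp
  replace hj : j ≤ m := by omega
  replace hk : k ≤ n := by omega
  obtain ⟨⟨hG₁, hG₁lo, hG₁hi⟩, hG₂, hG₂lo, hG₂hi⟩ := joinCut_spec hu hv hj hk hδ hε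
  obtain ⟨hδp, -, -, h1⟩ := (mem_minConvSet_cutW hu hv hj hk).1 hδ
  obtain ⟨hεp, -, -, hN⟩ := (mem_maxConvSet_cutW hu hv hj hk).1 hε
  set G₁ := mergeSide u j (j + k) (δ.take j) (ε.take (m - j))
  set G₂ := mergeSide v k (j + k) (δ.drop j) (ε.drop (m - j))
  have hlen : G₁.length + G₂.length = m + n := by
    simp only [G₁, G₂, length_mergeSide, length_of_mem_permWords hu, length_of_mem_permWords hv]
  simp only [joinCut, Finset.mem_product, Finset.mem_Ioo]
  refine ⟨?_, by split_ifs at hlo <;> omega, by split_ifs at hhi <;> omega⟩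
  have hmem : G₁ ++ G₂ ∈ permWords (m + n) := by
    refine mem_permWords_of_cutW (i := j + k) (ε := ε) (by omega) ?_ ?_ ?_
    · rwa [cutW, filter_append, hG₁lo, hG₂lo, take_append_drop]
    · rw [filter_append, hG₁hi, hG₂hi, ← map_append, take_append_drop]
    · rwa [show m + n - (j + k) = m - j + (n - k) by omega]
  have hNi : m - j + (n - k) + (j + k) = m + n := by omega
  have key := append_mem_halfConvSet (b₁ := b₁) (b₂ := b₂) (by rwa [hlen]) ?_ ?_
  · rwa [hG₁, hG₂] at key
  · cases b₁
    · exact mem_of_mem_filter (hG₂lo ▸ h1 : 1 ∈ G₂.filter (· ≤ j + k))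
    · exact mem_of_mem_filter (hG₁lo ▸ h1 : 1 ∈ G₁.filter (· ≤ j + k))
  · rw [hlen, ← hNi]
    cases b₂
    · exact mem_of_mem_filter (p := (j + k < ·)) (hG₁hi ▸ mem_map_of_mem hN)
    · exact mem_of_mem_filter (p := (j + k < ·)) (hG₂hi ▸ mem_map_of_mem hN)

theorem splitCut_joinCut (hu : u ∈ permWords m) (hv : v ∈ permWords n)
    (hp : (j, k) ∈ cutIndices m n b₁ b₂) (hδ : δ ∈ minConvSet b₁ (cutW u j).1 (cutW v k).1)
    (hε : ε ∈ maxConvSet b₂ (cutW u j).2 (cutW v k).2) :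
    splitCut m (joinCut m u v ⟨(j, k), (δ, ε)⟩) = ⟨(j, k), (δ, ε)⟩ := by
  simp only [cutIndices, Finset.mem_filter, Finset.mem_product, Finset.mem_range] at hp
  have hj : j ≤ m := by omega
  have hk : k ≤ n := by omega
  obtain ⟨⟨-, hG₁lo, hG₁hi⟩, -, hG₂lo, hG₂hi⟩ := joinCut_spec hu hv hj hk hδ hε
  obtain ⟨hδp, -⟩ := (mem_minConvSet_cutW hu hv hj hk).1 hδ
  obtain ⟨hεp, -⟩ := (mem_maxConvSet_cutW hu hv hj hk).1 hε
  have hG₁m : (mergeSide u j (j + k) (δ.take j) (ε.take (m - j))).length = m := by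
    rw [length_mergeSide, length_of_mem_permWords hu]
  have hrank : rankW (mergeSide u j (j + k) (δ.take j) (ε.take (m - j))) (j + k) = j := by
    rw [rankW, hG₁lo, length_take, length_of_mem_permWords hδp]
    omega
  rw [joinCut, splitCut]
  simp only [take_left' hG₁m, hrank, cutW, filter_append, Nat.add_sub_cancel_left]
  rw [hG₁lo, hG₂lo, hG₁hi, hG₂hi, take_append_drop, ← map_append, take_append_drop,
    stdW_map_add, stdW_of_mem_permWords hεp]

theorem joinCut_splitCut (hu : u ∈ permWords m) (hv : v ∈ permWords n) {i : ℕ}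
    (hγ : γ ∈ halfConvSet b₁ b₂ u v) (hi : i ∈ Finset.Ioo 0 (m + n)) :
    joinCut m u v (splitCut m (γ, i)) = (γ, i) := by
  rw [Finset.mem_Ioo] at hi
  obtain ⟨A, B, rfl, rfl, rfl, rfl, hγp, -⟩ := exists_append_of_mem_halfConvSet hu hv hγ
  have hk : i - rankW A i = rankW B i := by
    have := rankW_add_rankW_of_append_mem_permWords hγp hi.2.le
    omega
  have hjk : rankW A i + rankW B i = i := rankW_add_rankW_of_append_mem_permWords hγp hi.2.le
  simp only [splitCut, joinCut, take_left', hk, hjk, take_cutW_fst_append,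
    drop_cutW_fst_append]
  rw [mergeSide_stdW_rankW A i (map_add_take_cutW_snd_append hγp hi.2.le),
    mergeSide_stdW_rankW B i (map_add_drop_cutW_snd_append hγp hi.2.le)]

end Bijection

section Corners

variable {m : ℕ} {u : List ℕ}

theorem minConvSet_true_nil (hm : 1 ≤ m) (hu : u ∈ permWords m) :
    minConvSet true u [] = {u} := by
  ext γ
  simp only [minConvSet, Finset.mem_filter, Finset.mem_singleton, length_nil, add_zero,
    length_of_mem_permWords hu, if_true]
  constructor
  · rintro ⟨hγ, h, -⟩
    rwa [take_of_length_le (length_of_mem_permWords hγ).le, stdW_of_mem_permWords hγ] at h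
  · rintro rfl
    have hlen := (length_of_mem_permWords hu).le
    rw [take_of_length_le hlen, drop_of_length_le hlen, stdW_of_mem_permWords hu]
    exact ⟨hu, rfl, rfl, mem_of_mem_permWords hu le_rfl hm⟩

theorem minConvSet_false_nil (hm : 1 ≤ m) (hu : u ∈ permWords m) :
    minConvSet false [] u = {u} := by
  ext γ
  simp only [minConvSet, Finset.mem_filter, Finset.mem_singleton, length_nil, zero_add,
    length_of_mem_permWords hu, take_zero, drop_zero, Bool.false_eq_true, if_false]
  constructor
  · rintro ⟨hγ, -, h, -⟩
    rwa [stdW_of_mem_permWords hγ] at h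
  · rintro rfl
    exact ⟨hu, rfl, stdW_of_mem_permWords hu, mem_of_mem_permWords hu le_rfl hm⟩

theorem maxConvSet_true_nil (hm : 1 ≤ m) (hu : u ∈ permWords m) :
    maxConvSet true [] u = {u} := by
  ext γ
  simp only [maxConvSet, Finset.mem_filter, Finset.mem_singleton, length_nil, zero_add,
    length_of_mem_permWords hu, take_zero, drop_zero, if_true]
  constructor
  · rintro ⟨hγ, -, h, -⟩
    rwa [stdW_of_mem_permWords hγ] at h
  · rintro rfl
    exact ⟨hu, rfl, stdW_of_mem_permWords hu, mem_of_mem_permWords hu hm le_rfl⟩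

theorem maxConvSet_false_nil (hm : 1 ≤ m) (hu : u ∈ permWords m) :
    maxConvSet false u [] = {u} := by
  ext γ
  simp only [maxConvSet, Finset.mem_filter, Finset.mem_singleton, length_nil, add_zero,
    length_of_mem_permWords hu, Bool.false_eq_true, if_false]
  constructor
  · rintro ⟨hγ, h, -⟩
    rwa [take_of_length_le (length_of_mem_permWords hγ).le, stdW_of_mem_permWords hγ] at h
  · rintro rfl
    have hlen := (length_of_mem_permWords hu).le
    rw [take_of_length_le hlen, drop_of_length_le hlen, stdW_of_mem_permWords hu]
    exact ⟨hu, rfl, rfl, mem_of_mem_permWords hu hm le_rfl⟩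

end Corners

section Coproduct

noncomputable def halfTensor (b₁ b₂ : Bool) (p q : List ℕ × List ℕ) : FW2 R :=
  ∑ δ ∈ minConvSet b₁ p.1 q.1, ∑ ε ∈ maxConvSet b₂ p.2 q.2, Finsupp.single (δ, ε) 1

variable {m n : ℕ} {b₁ b₂ : Bool}

theorem sum_copW_halfConvSet {u v : List ℕ} (hu : u ∈ permWords m) (hv : v ∈ permWords n) :
    ∑ γ ∈ halfConvSet b₁ b₂ u v, copW (R := R) γ =
      ∑ p ∈ cutIndices m n b₁ b₂, halfTensor b₁ b₂ (cutW u p.1) (cutW v p.2) := by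
  calc ∑ γ ∈ halfConvSet b₁ b₂ u v, copW (R := R) γ
      = ∑ γi ∈ halfConvSet b₁ b₂ u v ×ˢ Finset.Ioo 0 (m + n),
          Finsupp.single (cutW γi.1 γi.2) (1 : R) := by
        rw [Finset.sum_product]
        refine Finset.sum_congr rfl fun γ hγ => ?_
        obtain ⟨A, B, rfl, -, rfl, rfl, hγp, -⟩ := exists_append_of_mem_halfConvSet hu hv hγ
        rw [copW_eq_sum_cutW, length_of_mem_permWords hγp]
    _ = ∑ x ∈ (cutIndices m n b₁ b₂).sigma (fun p =>
          minConvSet b₁ (cutW u p.1).1 (cutW v p.2).1 ×ˢ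
            maxConvSet b₂ (cutW u p.1).2 (cutW v p.2).2), Finsupp.single x.2 1 := by
        refine Finset.sum_nbij' (splitCut m) (joinCut m u v) ?_ ?_ ?_ ?_ fun _ _ => rfl
        · rintro ⟨γ, i⟩ h
          rw [Finset.mem_product] at h
          exact splitCut_mem hu hv h.1 h.2
        · rintro ⟨⟨j, k⟩, δ, ε⟩ h
          simp only [Finset.mem_sigma, Finset.mem_product] at h
          exact joinCut_mem hu hv h.1 h.2.1 h.2.2
        · rintro ⟨γ, i⟩ h
          rw [Finset.mem_product] at h
          exact joinCut_splitCut hu hv h.1 h.2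
        · rintro ⟨⟨j, k⟩, δ, ε⟩ h
          simp only [Finset.mem_sigma, Finset.mem_product] at h
          exact splitCut_joinCut hu hv h.1 h.2.1 h.2.2
    _ = _ := by simp only [Finset.sum_sigma, Finset.sum_product, halfTensor]

theorem coprodW_eq_linearCombination (x : FW R) :
    coprodW x = Finsupp.linearCombination R copW x :=
  (Finsupp.linearCombination_apply R x).symm

variable {M : Type*} [AddCommGroup M] [Module R M] {x y : FW R}

theorem sum_smul_cutW_eq_zero (hx : ∀ u ∈ x.support, u ∈ permWords m) (hpx : coprodW x = 0)
    {j : ℕ} (hj : 0 < j) (hjm : j < m) (F : List ℕ × List ℕ → M) :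
    ∑ u ∈ x.support, x u • F (cutW u j) = 0 := by
  -- `G` reads off the component of `Δ̃` whose left factor has length `j`.
  set G := Finsupp.linearCombination R fun p : List ℕ × List ℕ =>
    if p.1.length = j then F p else 0
  have hterm : ∀ u ∈ x.support, G (copW u) = F (cutW u j) := by
    intro u hu
    have hum := hx u hu
    rw [copW_eq_sum_cutW, map_sum, length_of_mem_permWords hum]
    have hcut : ∀ i ∈ Finset.Ioo 0 m, G (Finsupp.single (cutW u i) 1) =
        if i = j then F (cutW u j) else 0 := by
      intro i hi
      rw [Finsupp.linearCombination_single, one_smul]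
      show (if (u.filter (· ≤ i)).length = j then F (cutW u i) else 0) = _
      rw [length_filter_le_of_mem_permWords hum (Finset.mem_Ioo.1 hi).2.le]
      by_cases h : i = j <;> simp [h]
    rw [Finset.sum_congr rfl hcut, Finset.sum_ite_eq', if_pos (Finset.mem_Ioo.2 ⟨hj, hjm⟩)]
  calc ∑ u ∈ x.support, x u • F (cutW u j)
      = ∑ u ∈ x.support, x u • G (copW u) :=
        Finset.sum_congr rfl fun u hu => by rw [hterm u hu]
    _ = G (coprodW x) := by simp only [coprodW, Finsupp.sum, map_sum, map_smul]
    _ = 0 := by rw [hpx, map_zero]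

theorem sum_sum_smul_sum_cutW_eq (hx : ∀ u ∈ x.support, u ∈ permWords m)
    (hy : ∀ v ∈ y.support, v ∈ permWords n) (hpx : coprodW x = 0) (hpy : coprodW y = 0)
    (P : Finset (ℕ × ℕ)) (Φ : List ℕ × List ℕ → List ℕ × List ℕ → M) :
    ∑ u ∈ x.support, ∑ v ∈ y.support, (x u * y v) • ∑ p ∈ P, Φ (cutW u p.1) (cutW v p.2) =
      ∑ p ∈ P with (p.1 = 0 ∨ m ≤ p.1) ∧ (p.2 = 0 ∨ n ≤ p.2),
        ∑ u ∈ x.support, ∑ v ∈ y.support, (x u * y v) • Φ (cutW u p.1) (cutW v p.2) := by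
  simp only [Finset.smul_sum]
  rw [Finset.sum_congr rfl fun u _ => Finset.sum_comm, Finset.sum_comm]
  refine (Finset.sum_filter_of_ne fun p _ hne => ?_).symm
  by_contra hcorner
  refine hne ?_
  rcases not_and_or.1 hcorner with h | h <;> push Not at h
  · rw [Finset.sum_comm]
    refine Finset.sum_eq_zero fun v _ => ?_
    simp only [mul_comm (x _), mul_smul]
    rw [← Finset.smul_sum, sum_smul_cutW_eq_zero hx hpx (Nat.pos_of_ne_zero h.1) h.2
      (Φ · (cutW v p.2)), smul_zero]
  · refine Finset.sum_eq_zero fun u _ => ?_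
    simp only [mul_smul]
    rw [← Finset.smul_sum, sum_smul_cutW_eq_zero hy hpy (Nat.pos_of_ne_zero h.1) h.2
      (Φ (cutW u p.1)), smul_zero]

end Coproduct

section Primitive

variable {m n : ℕ} {b₁ b₂ : Bool} {x y : FW R}

theorem coprodW_sum_halfConvSet (hx : ∀ u ∈ x.support, u ∈ permWords m)
    (hy : ∀ v ∈ y.support, v ∈ permWords n) (hpx : coprodW x = 0) (hpy : coprodW y = 0) :
    coprodW (x.sum fun u a => y.sum fun v b =>
        (a * b) • ∑ γ ∈ halfConvSet b₁ b₂ u v, Finsupp.single γ (1 : R)) =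
      ∑ p ∈ cutIndices m n b₁ b₂ with (p.1 = 0 ∨ m ≤ p.1) ∧ (p.2 = 0 ∨ n ≤ p.2),
        ∑ u ∈ x.support, ∑ v ∈ y.support,
          (x u * y v) • halfTensor b₁ b₂ (cutW u p.1) (cutW v p.2) := by
  rw [← sum_sum_smul_sum_cutW_eq hx hy hpx hpy, coprodW_eq_linearCombination]
  simp only [Finsupp.sum, map_sum, map_smul, Finsupp.linearCombination_single, one_smul]
  exact Finset.sum_congr rfl fun u hu => Finset.sum_congr rfl fun v hv => by
    rw [sum_copW_halfConvSet (hx u hu) (hy v hv)]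

theorem coprodW_neExt (hm : 1 ≤ m) (hn : 1 ≤ n) (hx : ∀ u ∈ x.support, u ∈ permWords m)
    (hy : ∀ v ∈ y.support, v ∈ permWords n) (hpx : coprodW x = 0) (hpy : coprodW y = 0) :
    coprodW (neExt x y) =
      ∑ u ∈ x.support, ∑ v ∈ y.support, (x u * y v) • Finsupp.single (u, v) 1 := by
  have hcorner : {p ∈ cutIndices m n true true | (p.1 = 0 ∨ m ≤ p.1) ∧ (p.2 = 0 ∨ n ≤ p.2)} =
      {(m, 0)} := by
    ext ⟨j, k⟩
    simp only [cutIndices, Finset.mem_filter, Finset.mem_product, Finset.mem_range,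
      Finset.mem_singleton, if_true, Prod.mk.injEq]
    omega
  simp only [neExt, neW_eq_sum_halfConvSet]
  rw [coprodW_sum_halfConvSet hx hy hpx hpy, hcorner, Finset.sum_singleton]
  refine Finset.sum_congr rfl fun u hu => Finset.sum_congr rfl fun v hv => ?_
  rw [cutW_self_of_mem_permWords (hx u hu), cutW_zero_of_mem_permWords (hy v hv), halfTensor,
    minConvSet_true_nil hm (hx u hu), maxConvSet_true_nil hn (hy v hv), Finset.sum_singleton,
    Finset.sum_singleton]

theorem coprodW_swExt (hm : 1 ≤ m) (hn : 1 ≤ n) (hx : ∀ u ∈ x.support, u ∈ permWords m)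
    (hy : ∀ v ∈ y.support, v ∈ permWords n) (hpx : coprodW x = 0) (hpy : coprodW y = 0) :
    coprodW (swExt y x) =
      ∑ u ∈ x.support, ∑ v ∈ y.support, (x u * y v) • Finsupp.single (u, v) 1 := by
  have hcorner : {p ∈ cutIndices n m false false | (p.1 = 0 ∨ n ≤ p.1) ∧ (p.2 = 0 ∨ m ≤ p.2)} =
      {(0, m)} := by
    ext ⟨k, j⟩
    simp only [cutIndices, Finset.mem_filter, Finset.mem_product, Finset.mem_range,
      Finset.mem_singleton, Bool.false_eq_true, if_false, Prod.mk.injEq]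
    omega
  simp only [swExt, swW_eq_sum_halfConvSet]
  rw [coprodW_sum_halfConvSet hy hx hpy hpx, hcorner, Finset.sum_singleton,
    Finset.sum_comm]
  refine Finset.sum_congr rfl fun u hu => Finset.sum_congr rfl fun v hv => ?_
  rw [mul_comm, cutW_zero_of_mem_permWords (hy v hv), cutW_self_of_mem_permWords (hx u hu),
    halfTensor, minConvSet_false_nil hm (hx u hu), maxConvSet_false_nil hn (hy v hv),
    Finset.sum_singleton, Finset.sum_singleton]

end Primitive

theorem stmt9 : ∀ m n : ℕ, 1 ≤ m → 1 ≤ n → ∀ x y : FW ℚ,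
    ↑x.support ⊆ (permWords m : Set (List ℕ)) →
    ↑y.support ⊆ (permWords n : Set (List ℕ)) →
    coprodW x = 0 → coprodW y = 0 →
    coprodW (neExt x y - swExt y x) = 0 := by
  intro m n hm hn x y hx hy hpx hpy
  rw [coprodW_eq_linearCombination, map_sub, ← coprodW_eq_linearCombination,
    ← coprodW_eq_linearCombination, coprodW_neExt hm hn (fun u hu => hx hu) (fun v hv => hy hv)
      hpx hpy, coprodW_swExt hm hn (fun u hu => hx hu) (fun v hv => hy hv) hpx hpy, sub_self]
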